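/- The 13-point rank-3 matroid M (defined below) contains the non-Fano matroid F_7^- as a minor; specifically, the restriction of M to {6,7,8,9,10,11,12} is isomorphic to F_7^-. -/
import Mathlib


/-- The nontrivial lines of the 13-point rank-3 matroid `M`. -/
def mLines : Set (Set (Fin 13)) :=
  {{0,3,9}, {0,4,7}, {0,5,6}, {8,9,10}, {7,10,11},
   {1,4,9}, {1,3,7}, {1,5,8}, {6,9,11}, {6,10,12},
   {2,5,9}, {2,3,6}, {2,4,8}, {7,9,12}, {8,11,12}}

/-- `M` is the simple rank-3 matroid on `{0,…,12}` whose dependent 3-sets are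
exactly the lines in `mLines`. -/
def IsM (M : Matroid (Fin 13)) : Prop :=
  M.E = Set.univ ∧ ∀ I : Set (Fin 13), M.Indep I ↔ I.encard ≤ 3 ∧ I ∉ mLines

def nonFanoLines : Set (Set (Fin 7)) :=
  {{0,1,5}, {0,2,4}, {0,3,6}, {1,2,3}, {1,4,6}, {2,5,6}}

/-- An identification of `{0,…,6}` with `{6,…,12} ⊆ {0,…,12}`. -/
def emb : Fin 7 → Fin 13 := ![9, 10, 11, 7, 6, 8, 12]

lemma emb_inj : Function.Injective emb := by decide

lemma emb_eq1 : emb '' ({0,1,5} : Set (Fin 7)) = {8,9,10} := by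
  simp only [Set.image_insert_eq, Set.image_singleton, emb]
  ext x; simp [Matrix.cons_val_zero, Matrix.cons_val_one]; tauto

lemma emb_eq2 : emb '' ({0,2,4} : Set (Fin 7)) = {6,9,11} := by
  simp only [Set.image_insert_eq, Set.image_singleton, emb]
  ext x; simp; tauto

lemma emb_eq3 : emb '' ({0,3,6} : Set (Fin 7)) = {7,9,12} := by
  simp only [Set.image_insert_eq, Set.image_singleton, emb]
  ext x; simp; tauto

lemma emb_eq4 : emb '' ({1,2,3} : Set (Fin 7)) = {7,10,11} := by
  simp only [Set.image_insert_eq, Set.image_singleton, emb]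
  ext x; simp; tauto

lemma emb_eq5 : emb '' ({1,4,6} : Set (Fin 7)) = {6,10,12} := by
  simp only [Set.image_insert_eq, Set.image_singleton, emb]
  ext x; simp; tauto

lemma emb_eq6 : emb '' ({2,5,6} : Set (Fin 7)) = {8,11,12} := by
  simp only [Set.image_insert_eq, Set.image_singleton, emb]
  ext x; simp; tauto

lemma emb_key (I : Set (Fin 7)) : emb '' I ∈ mLines ↔ I ∈ nonFanoLines := by
  have himg : Function.Injective (Set.image emb) := Set.image_injective.mpr emb_inj
  have hsub : ∀ x ∈ emb '' I, 6 ≤ (x : Fin 13).val := by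
    rintro x ⟨i, -, rfl⟩; fin_cases i <;> decide
  constructor
  · intro h
    simp only [mLines, Set.mem_insert_iff, Set.mem_singleton_iff] at h
    simp only [nonFanoLines, Set.mem_insert_iff, Set.mem_singleton_iff]
    rcases h with h|h|h|h|h|h|h|h|h|h|h|h|h|h|h
    · exact absurd (hsub 0 (by rw [h]; simp)) (by decide)
    · exact absurd (hsub 0 (by rw [h]; simp)) (by decide)
    · exact absurd (hsub 0 (by rw [h]; simp)) (by decide)
    · exact Or.inl (himg (emb_eq1 ▸ h))
    · exact Or.inr (Or.inr (Or.inr (Or.inl (himg (emb_eq4 ▸ h)))))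
    · exact absurd (hsub 1 (by rw [h]; simp)) (by decide)
    · exact absurd (hsub 1 (by rw [h]; simp)) (by decide)
    · exact absurd (hsub 1 (by rw [h]; simp)) (by decide)
    · exact Or.inr (Or.inl (himg (emb_eq2 ▸ h)))
    · exact Or.inr (Or.inr (Or.inr (Or.inr (Or.inl (himg (emb_eq5 ▸ h))))))
    · exact absurd (hsub 2 (by rw [h]; simp)) (by decide)
    · exact absurd (hsub 2 (by rw [h]; simp)) (by decide)
    · exact absurd (hsub 2 (by rw [h]; simp)) (by decide)
    · exact Or.inr (Or.inr (Or.inl (himg (emb_eq3 ▸ h))))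
    · exact Or.inr (Or.inr (Or.inr (Or.inr (Or.inr (himg (emb_eq6 ▸ h))))))
  · intro h
    simp only [nonFanoLines, Set.mem_insert_iff, Set.mem_singleton_iff] at h
    simp only [mLines, Set.mem_insert_iff, Set.mem_singleton_iff]
    rcases h with rfl|rfl|rfl|rfl|rfl|rfl
    · rw [emb_eq1]; tauto
    · rw [emb_eq2]; tauto
    · rw [emb_eq3]; tauto
    · rw [emb_eq4]; tauto
    · rw [emb_eq5]; tauto
    · rw [emb_eq6]; tauto

/-- The restriction of `M` to `{6,…,12}` is isomorphic to the non-Fano matroid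
`F₇⁻`, via the bijection `emb` of `{0,…,6}` with `{6,…,12}`. -/
theorem restriction_isNonFano (M : Matroid (Fin 13)) (hM : IsM M) :
    Function.Injective emb ∧ Set.range emb = {x : Fin 13 | 6 ≤ x.val} ∧
    ∀ I : Set (Fin 7),
      (M.restrict {x : Fin 13 | 6 ≤ x.val}).Indep (emb '' I) ↔
        I.encard ≤ 3 ∧ I ∉ nonFanoLines := by
  have hrange : Set.range emb = {x : Fin 13 | 6 ≤ x.val} := by
    ext x
    simp only [Set.mem_range, Set.mem_setOf_eq]
    revert x; decide
  refine ⟨emb_inj, hrange, fun I => ?_⟩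
  have hsub : emb '' I ⊆ {x : Fin 13 | 6 ≤ x.val} :=
    hrange ▸ Set.image_subset_range emb I
  rw [Matroid.restrict_indep_iff, hM.2, emb_inj.injOn.encard_image, emb_key]
  tauto
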